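/- arXiv:1304.0098 — 2 statements merged into one kernel-verified Lean document; each statement's English description precedes it below -/
import Mathlib

section
/- A ring R is Dedekind-finite (i.e., a·b = 1 implies b·a = 1 for all a,b ∈ R) if and only if for every point p of the projective line over R (i.e., every submodule in the GL₂(R)-orbit of R·(1,0)), every generator (a,b) of p with p = R·(a,b) is an admissible pair. -/
open Matrix

/-- A pair `(a,b)` is admissible if it is the first row of an invertible 2×2 matrix. -/
def Admissible {R : Type*} [Ring R] (a b : R) : Prop :=
  ∃ c d : R, IsUnit (Matrix.of ![![a, b], ![c, d]])

/-- The cyclic left submodule of `R²` generated by a vector. -/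
def cyc {R : Type*} [Ring R] (v : Fin 2 → R) : Submodule R (Fin 2 → R) :=
  Submodule.span R {v}

/-- The projective line over `R`: the orbit of `R·(1,0)` under `GL₂(R)`
(acting by right multiplication on row vectors). -/
def ProjLine (R : Type*) [Ring R] : Set (Submodule R (Fin 2 → R)) :=
  {p | ∃ γ : (Matrix (Fin 2) (Fin 2) R)ˣ,
    p = cyc (Matrix.vecMul ![1, 0] (γ.val))}

/-- Two points are distant if the pair lies in the `GL₂(R)`-orbit of
`(R·(1,0), R·(0,1))`. -/
def Distant {R : Type*} [Ring R] (p q : Submodule R (Fin 2 → R)) : Prop :=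
  ∃ γ : (Matrix (Fin 2) (Fin 2) R)ˣ,
    p = cyc (Matrix.vecMul ![1, 0] (γ.val)) ∧
    q = cyc (Matrix.vecMul ![0, 1] (γ.val))

/-!
If `R·(a,b) = R·w` with `w` the first row of an invertible matrix `γ`, then `(a,b) = r·w` and
`w = s·(a,b)` with `s r = 1`, because `w` has zero annihilator. Dedekind-finiteness makes `r` a
unit, and `diag(r,1)·γ` is an invertible matrix with first row `(a,b)`. Conversely, if `a b = 1`
then `R·(b,0) = R·(1,0)`, and an invertible matrix with first row `(b,0)` gives `b x = 1` for
some `x`, which forces `x = a`.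
-/

section

variable {R : Type*} [Ring R]

theorem Submodule.exists_mul_eq_one_of_span_singleton_eq {M : Type*} [AddCommGroup M] [Module R M]
    {v w : M} (h : Submodule.span R {v} = Submodule.span R {w})
    (hv : ∀ x : R, x • v = 0 → x = 0) : ∃ r s : R, r • v = w ∧ s * r = 1 := by
  obtain ⟨r, hr⟩ := Submodule.mem_span_singleton.1 (h ▸ Submodule.mem_span_singleton_self w)
  obtain ⟨s, hs⟩ := Submodule.mem_span_singleton.1 (h.symm ▸ Submodule.mem_span_singleton_self v)
  refine ⟨r, s, hr, sub_eq_zero.1 (hv _ ?_)⟩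
  rw [sub_smul, mul_smul, hr, hs, one_smul, sub_self]

theorem Submodule.span_singleton_eq_of_smul_eq {M : Type*} [AddCommGroup M] [Module R M]
    {v w : M} {r s : R} (hr : r • v = w) (hs : s • w = v) :
    Submodule.span R {v} = Submodule.span R {w} :=
  le_antisymm
    ((Submodule.span_singleton_le_iff_mem _ _).2 (Submodule.mem_span_singleton.2 ⟨s, hs⟩))
    ((Submodule.span_singleton_le_iff_mem _ _).2 (Submodule.mem_span_singleton.2 ⟨r, hr⟩))

namespace Matrix

theorem vec2_one_zero_vecMul (M : Matrix (Fin 2) (Fin 2) R) : ![1, 0] ᵥ* M = M 0 := by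
  ext j
  simp [vecMul, dotProduct, Fin.sum_univ_two]

theorem eq_zero_of_smul_row_eq_zero {n : Type*} [Fintype n] [DecidableEq n]
    (γ : (Matrix n n R)ˣ) (i : n) {x : R} (hx : x • γ.val i = 0) : x = 0 := by
  have h : Pi.single i x ᵥ* (γ.val * γ⁻¹.val) = 0 := by
    rw [← vecMul_vecMul, single_vecMul, row, hx, zero_vecMul]
  rw [Units.mul_inv, vecMul_one] at h
  simpa using congrFun h i

end Matrix

theorem admissible_row_zero (γ : (Matrix (Fin 2) (Fin 2) R)ˣ) :
    Admissible (γ.val 0 0) (γ.val 0 1) :=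
  ⟨γ.val 1 0, γ.val 1 1, by rw [← Matrix.eta_fin_two]; exact γ.isUnit⟩

theorem Admissible.mul_left {a b r : R} (h : Admissible a b) (hr : IsUnit r) :
    Admissible (r * a) (r * b) := by
  obtain ⟨c, d, hM⟩ := h
  have hD : IsUnit (Matrix.diagonal ![r, 1]) :=
    (Pi.isUnit_iff.2 (by simp [Fin.forall_fin_two, hr])).map (Matrix.diagonalRingHom (Fin 2) R)
  refine ⟨c, d, ?_⟩
  convert hD.mul hM using 1
  ext i j
  fin_cases i <;> fin_cases j <;> simp [Matrix.diagonal_mul]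

theorem Admissible.exists_mul_add_mul_eq_one {a b : R} (h : Admissible a b) :
    ∃ x y : R, a * x + b * y = 1 := by
  obtain ⟨c, d, hM⟩ := h
  obtain ⟨N, hN⟩ := hM.exists_right_inv
  refine ⟨N 0 0, N 1 0, ?_⟩
  simpa [Matrix.mul_apply, Fin.sum_univ_two] using congrFun (congrFun hN 0) 0

end

theorem stmt5 {R : Type*} [Ring R] :
    (∀ a b : R, a * b = 1 → b * a = 1) ↔
      ∀ p ∈ ProjLine R, ∀ a b : R, p = cyc ![a, b] → Admissible a b := by
  constructor
  · rintro hfin p ⟨γ, rfl⟩ a b hp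
    rw [cyc, cyc, Matrix.vec2_one_zero_vecMul] at hp
    obtain ⟨r, s, hr, hsr⟩ := Submodule.exists_mul_eq_one_of_span_singleton_eq hp
      fun _ ↦ Matrix.eq_zero_of_smul_row_eq_zero γ 0
    have hru : IsUnit r := isUnit_iff_exists.2 ⟨s, hfin s r hsr, hsr⟩
    have ha : r * γ.val 0 0 = a := congrFun hr 0
    have hb : r * γ.val 0 1 = b := congrFun hr 1
    exact ha ▸ hb ▸ (admissible_row_zero γ).mul_left hru
  · intro h a b hab
    have hp : cyc ![(1 : R), 0] ∈ ProjLine R := ⟨1, by rw [Units.val_one, Matrix.vecMul_one]⟩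
    have hgen : cyc ![(1 : R), 0] = cyc ![b, 0] :=
      Submodule.span_singleton_eq_of_smul_eq (r := b) (s := a) (by simp) (by simp [hab])
    obtain ⟨x, _, hx⟩ := (h _ hp b 0 hgen).exists_mul_add_mul_eq_one
    rw [zero_mul, add_zero] at hx
    rwa [left_inv_eq_right_inv hab hx]
end

section
/- Let φ: R → S be a unital ring homomorphism and φ̄: P(R) → P(S) the induced map. The following are equivalent: (1) for all p,q ∈ P(R), if p^φ̄ and q^φ̄ are distant then p and q are distant; (2) for all y ∈ R, if y^φ is invertible in S then y is invertible in R. -/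
/-! Two unimodular generators of the same cyclic submodule differ by a unit factor, so for
admissible rows `u`, `v` the points `cyc u`, `cyc v` are distant iff the matrix with rows `u`, `v`
is invertible; thus (1) says that `φ` reflects invertibility of such matrices. If the first row of
`M` is the first row of an invertible `A`, then `M = [[1, 0], [x, y]] * A`, and this triangular
factor is invertible iff `y` is; this gives (2) ⇒ (1), and the matrix `[[1, 0], [1, y]]` gives
(1) ⇒ (2). -/

open Matrix

namespace Matrix

variable {R : Type*} [Ring R]

lemma vecMul_vecCons_one_zero (M : Matrix (Fin 2) (Fin 2) R) : vecMul ![1, 0] M = M 0 := by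
  ext j; simp [vecMul, dotProduct]

lemma vecMul_vecCons_zero_one (M : Matrix (Fin 2) (Fin 2) R) : vecMul ![0, 1] M = M 1 := by
  ext j; simp [vecMul, dotProduct]

lemma exists_row_dotProduct_eq_one_of_isUnit {n : Type*} [Fintype n] [DecidableEq n]
    {M : Matrix n n R} (hM : IsUnit M) (i : n) : ∃ w, M i ⬝ᵥ w = 1 := by
  obtain ⟨U, rfl⟩ := hM
  exact ⟨fun j => (U⁻¹).val j i, by rw [← mul_apply', U.mul_inv, one_apply_eq]⟩

lemma isUnit_lowerTriangular_one_iff {x y : R} :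
    IsUnit (of ![![1, 0], ![x, y]]) ↔ IsUnit y := by
  constructor
  · rintro ⟨U, hU⟩
    have hright := congrFun₂ U.mul_inv
    have hleft := congrFun₂ U.inv_mul
    simp only [hU, mul_apply, Fin.sum_univ_two] at hright hleft
    have hN01 : (U⁻¹).val 0 1 = 0 := by simpa using hright 0 1
    exact ⟨⟨y, (U⁻¹).val 1 1, by simpa [hN01] using hright 1 1,
      by simpa using hleft 1 1⟩, rfl⟩
  · rintro ⟨v, rfl⟩
    refine isUnit_iff_exists.mpr ⟨of ![![1, 0], ![-(↑v⁻¹ * x), ↑v⁻¹]], ?_, ?_⟩ <;>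
      ext i j <;> fin_cases i <;> fin_cases j <;> simp [mul_apply, ← mul_assoc]

lemma isUnit_upperUnitriangular (b : R) : IsUnit (of ![![1, b], ![0, 1]]) :=
  isUnit_iff_exists.mpr ⟨of ![![1, -b], ![0, 1]], by ext i j; fin_cases i <;> fin_cases j <;>
    simp [mul_apply], by ext i j; fin_cases i <;> fin_cases j <;> simp [mul_apply]⟩

lemma exists_lowerTriangular_mul_eq {M : Matrix (Fin 2) (Fin 2) R}
    (A : (Matrix (Fin 2) (Fin 2) R)ˣ) (hrow : M 0 = A.val 0) :
    ∃ x y : R, M = of ![![1, 0], ![x, y]] * A.val := by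
  refine ⟨(M * A⁻¹.val) 1 0, (M * A⁻¹.val) 1 1, ?_⟩
  have hrow0 : (M * A⁻¹.val) 0 = (1 : Matrix (Fin 2) (Fin 2) R) 0 := by
    ext j; rw [mul_apply', hrow, ← mul_apply', A.mul_inv]
  have hK : M * A⁻¹.val = of ![![1, 0], ![(M * A⁻¹.val) 1 0, (M * A⁻¹.val) 1 1]] := by
    ext i j; fin_cases i <;> fin_cases j <;> simp [hrow0]
  rw [← hK, mul_assoc, A.inv_mul, mul_one]

end Matrix

lemma RingHom.mapMatrix_of_fin_two {R S : Type*} [Ring R] [Ring S] (φ : R →+* S) (a b c d : R) :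
    φ.mapMatrix (of ![![a, b], ![c, d]]) = of ![![φ a, φ b], ![φ c, φ d]] := by
  ext i j; fin_cases i <;> fin_cases j <;> simp

section ProjectiveLine

variable {R : Type*} [Ring R]

lemma admissible_one (b : R) : Admissible 1 b :=
  ⟨0, 1, isUnit_upperUnitriangular b⟩

lemma Admissible.map {S : Type*} [Ring S] (φ : R →+* S) {a b : R} (h : Admissible a b) :
    Admissible (φ a) (φ b) := by
  obtain ⟨c, d, hu⟩ := h
  exact ⟨φ c, φ d, φ.mapMatrix_of_fin_two a b c d ▸ hu.map φ.mapMatrix⟩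

lemma Admissible.exists_dotProduct_eq_one {a b : R} (h : Admissible a b) :
    ∃ w, ![a, b] ⬝ᵥ w = 1 := by
  obtain ⟨c, d, hu⟩ := h
  exact exists_row_dotProduct_eq_one_of_isUnit hu 0

lemma exists_unit_smul_eq_of_cyc_eq {u v : Fin 2 → R} (hu : ∃ w, u ⬝ᵥ w = 1)
    (hv : ∃ w, v ⬝ᵥ w = 1) (h : cyc u = cyc v) : ∃ r : Rˣ, u = (r : R) • v := by
  have hu_mem : u ∈ cyc v := h ▸ Submodule.mem_span_singleton_self u
  have hv_mem : v ∈ cyc u := h ▸ Submodule.mem_span_singleton_self v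
  obtain ⟨r, hr⟩ := Submodule.mem_span_singleton.mp hu_mem
  obtain ⟨s, hs⟩ := Submodule.mem_span_singleton.mp hv_mem
  have cancel {x y : R} {t : Fin 2 → R} (ht : ∃ w, t ⬝ᵥ w = 1) (hxy : (x * y) • t = t) :
      x * y = 1 := by
    obtain ⟨w, hw⟩ := ht
    simpa [smul_dotProduct, hw] using congrArg (· ⬝ᵥ w) hxy
  have hrs : r * s = 1 := cancel hu (by rw [mul_smul, hs, hr])
  have hsr : s * r = 1 := cancel hv (by rw [mul_smul, hr, hs])
  exact ⟨⟨r, s, hrs, hsr⟩, hr.symm⟩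

lemma distant_cyc_iff_isUnit {u v : Fin 2 → R} (hu : ∃ w, u ⬝ᵥ w = 1)
    (hv : ∃ w, v ⬝ᵥ w = 1) : Distant (cyc u) (cyc v) ↔ IsUnit (of ![u, v]) := by
  constructor
  · rintro ⟨Γ, h0, h1⟩
    rw [vecMul_vecCons_one_zero] at h0
    rw [vecMul_vecCons_zero_one] at h1
    obtain ⟨r, hr⟩ := exists_unit_smul_eq_of_cyc_eq hu (exists_row_dotProduct_eq_one_of_isUnit Γ.isUnit 0) h0
    obtain ⟨r', hr'⟩ := exists_unit_smul_eq_of_cyc_eq hv (exists_row_dotProduct_eq_one_of_isUnit Γ.isUnit 1) h1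
    have hD : IsUnit (diagonal ![(r : R), r']) :=
      (Pi.isUnit_iff.mpr fun i => by fin_cases i <;> simp).map (diagonalRingHom (Fin 2) R)
    have hfactor : of ![u, v] = diagonal ![(r : R), r'] * Γ.val := by
      ext i j; fin_cases i <;> simp [diagonal_mul, hr, hr']
    exact hfactor ▸ hD.mul Γ.isUnit
  · rintro ⟨Γ, hΓ⟩
    exact ⟨Γ, by rw [vecMul_vecCons_one_zero, hΓ]; rfl, by rw [vecMul_vecCons_zero_one, hΓ]; rfl⟩

end ProjectiveLine

lemma isUnit_of_isUnit_mapMatrix {R S : Type*} [Ring R] [Ring S] {φ : R →+* S}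
    (hφ : ∀ y : R, IsUnit (φ y) → IsUnit y) {M : Matrix (Fin 2) (Fin 2) R}
    (A : (Matrix (Fin 2) (Fin 2) R)ˣ) (hrow : M 0 = A.val 0) (hM : IsUnit (φ.mapMatrix M)) :
    IsUnit M := by
  obtain ⟨x, y, rfl⟩ := exists_lowerTriangular_mul_eq A hrow
  rw [map_mul, φ.mapMatrix_of_fin_two, map_one, map_zero,
    (A.isUnit.map φ.mapMatrix).mul_right_iff, isUnit_lowerTriangular_one_iff] at hM
  rw [A.isUnit.mul_right_iff, isUnit_lowerTriangular_one_iff]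
  exact hφ y hM

theorem stmt15 {R S : Type*} [Ring R] [Ring S] (φ : R →+* S) :
    (∀ a b c d : R, Admissible a b → Admissible c d →
      Distant (cyc ![φ a, φ b]) (cyc ![φ c, φ d]) →
      Distant (cyc ![a, b]) (cyc ![c, d])) ↔
    (∀ y : R, IsUnit (φ y) → IsUnit y) := by
  constructor
  · intro h y hy
    have hdist : Distant (cyc ![φ 1, φ 0]) (cyc ![φ 1, φ y]) := by
      rw [distant_cyc_iff_isUnit ((admissible_one 0).map φ).exists_dotProduct_eq_one
        ((admissible_one y).map φ).exists_dotProduct_eq_one, map_one, map_zero]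
      exact isUnit_lowerTriangular_one_iff.mpr hy
    have := h 1 0 1 y (admissible_one 0) (admissible_one y) hdist
    rw [distant_cyc_iff_isUnit (admissible_one 0).exists_dotProduct_eq_one
      (admissible_one y).exists_dotProduct_eq_one] at this
    exact isUnit_lowerTriangular_one_iff.mp this
  · intro h a b c d hab hcd hdist
    rw [distant_cyc_iff_isUnit (hab.map φ).exists_dotProduct_eq_one
      (hcd.map φ).exists_dotProduct_eq_one, ← φ.mapMatrix_of_fin_two] at hdist
    rw [distant_cyc_iff_isUnit hab.exists_dotProduct_eq_one hcd.exists_dotProduct_eq_one]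
    obtain ⟨c', d', A, hA⟩ := hab
    exact isUnit_of_isUnit_mapMatrix h A (by rw [hA]; rfl) hdist
end
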